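/- arXiv:2603.02820 — 4 statements merged into one kernel-verified Lean document; each statement's English description precedes it below -/
import Mathlib

section
/- Let σ, σ_β, κ > 0 and β̄, δ, r ∈ ℝ, and consider the vector fields on ℝ² given by V⁰(z,β) = ( z(β² - σσ_β + 2σ²(δ-r))/(2σ²), (βσ_β + κσ(β̄-β))/σ ) and V¹(z,β) = ( -(β/σ)z, -σ_β ). Then the Lie bracket [V⁰,V¹](z,β) := DV¹(z,β)·V⁰(z,β) - DV⁰(z,β)·V¹(z,β) equals ( -(zκ(β̄-β))/σ, -(σ_β/σ)(κσ - σ_β) ) for every (z,β) ∈ ℝ². -/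
/-- The Stratonovich-corrected drift vector field of the diffusion `(Ẑ, β̂)`. -/
noncomputable def driftVF (σ σβ κ βbar δ r : ℝ) : ℝ × ℝ → ℝ × ℝ :=
  fun p => (p.1 * (p.2 ^ 2 - σ * σβ + 2 * σ ^ 2 * (δ - r)) / (2 * σ ^ 2),
            (p.2 * σβ + κ * σ * (βbar - p.2)) / σ)

/-- The diffusion vector field of the diffusion `(Ẑ, β̂)`. -/
noncomputable def diffusionVF (σ σβ : ℝ) : ℝ × ℝ → ℝ × ℝ :=
  fun p => (-(p.2 / σ) * p.1, -σβ)

theorem HasFDerivAt.div_const {𝕜 𝕜' E : Type*} [NontriviallyNormedField 𝕜] [NormedField 𝕜']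
    [NormedAlgebra 𝕜 𝕜'] [NormedAddCommGroup E] [NormedSpace 𝕜 E] {c : E → 𝕜'} {c' : E →L[𝕜] 𝕜'}
    {x : E} (hc : HasFDerivAt c c' x) (d : 𝕜') :
    HasFDerivAt (fun y => c y / d) (d⁻¹ • c') x := by
  simpa only [div_eq_mul_inv] using hc.mul_const d⁻¹

theorem fderiv_diffusionVF_apply (σ σβ : ℝ) (p v : ℝ × ℝ) :
    fderiv ℝ (diffusionVF σ σβ) p v = (-(p.2 / σ) * v.1 - v.2 / σ * p.1, 0) := by
  have hz : HasFDerivAt Prod.fst (ContinuousLinearMap.fst ℝ ℝ ℝ) p := hasFDerivAt_fst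
  have hβ : HasFDerivAt Prod.snd (ContinuousLinearMap.snd ℝ ℝ ℝ) p := hasFDerivAt_snd
  have h : HasFDerivAt (diffusionVF σ σβ) _ p :=
    ((hβ.div_const σ).neg.mul hz).prodMk (hasFDerivAt_const (-σβ) p)
  rw [h.fderiv]
  simp only [ContinuousLinearMap.prod_apply, add_apply, neg_apply, Pi.neg_apply, smul_apply,
    zero_apply, ContinuousLinearMap.coe_fst', ContinuousLinearMap.coe_snd', smul_eq_mul,
    Prod.mk.injEq, and_true]
  ring

theorem fderiv_driftVF_apply (σ σβ κ βbar δ r : ℝ) (p v : ℝ × ℝ) :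
    fderiv ℝ (driftVF σ σβ κ βbar δ r) p v =
      ((v.1 * (p.2 ^ 2 - σ * σβ + 2 * σ ^ 2 * (δ - r)) + p.1 * (2 * p.2 * v.2)) / (2 * σ ^ 2),
        v.2 * (σβ - κ * σ) / σ) := by
  have hz : HasFDerivAt Prod.fst (ContinuousLinearMap.fst ℝ ℝ ℝ) p := hasFDerivAt_fst
  have hβ : HasFDerivAt Prod.snd (ContinuousLinearMap.snd ℝ ℝ ℝ) p := hasFDerivAt_snd
  have h : HasFDerivAt (driftVF σ σβ κ βbar δ r) _ p :=
    ((hz.mul (((hβ.pow 2).sub_const (σ * σβ)).add_const (2 * σ ^ 2 * (δ - r)))).div_const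
        (2 * σ ^ 2)).prodMk
      (((hβ.mul_const σβ).add ((hasFDerivAt_const (κ * σ) p).mul
        ((hasFDerivAt_const βbar p).sub hβ))).div_const σ)
  rw [h.fderiv]
  simp only [ContinuousLinearMap.prod_apply, add_apply, sub_apply, smul_apply, zero_apply,
    ContinuousLinearMap.coe_fst', ContinuousLinearMap.coe_snd', smul_eq_mul, nsmul_eq_mul,
    Prod.mk.injEq]
  constructor <;> ring

theorem stmt1_general (σ σβ κ βbar δ r : ℝ) (hσ : 0 < σ)
    (p : ℝ × ℝ) :
    fderiv ℝ (diffusionVF σ σβ) p (driftVF σ σβ κ βbar δ r p)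
      - fderiv ℝ (driftVF σ σβ κ βbar δ r) p (diffusionVF σ σβ p)
      = (-(p.1 * κ * (βbar - p.2)) / σ, -(σβ / σ) * (κ * σ - σβ)) := by
  rw [fderiv_diffusionVF_apply, fderiv_driftVF_apply]
  simp only [driftVF, diffusionVF, Prod.mk_sub_mk, Prod.mk.injEq]
  constructor <;> field_simp <;> ring

/-- The Lie bracket `[V⁰,V¹] = DV¹·V⁰ - DV⁰·V¹` of the drift and diffusion vector fields
equals `( -(zκ(β̄-β))/σ , -(σ_β/σ)(κσ - σ_β) )` at every point `(z,β) ∈ ℝ²`. -/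
theorem stmt1 (σ σβ κ βbar δ r : ℝ) (hσ : 0 < σ) (hσβ : 0 < σβ) (hκ : 0 < κ)
    (p : ℝ × ℝ) :
    fderiv ℝ (diffusionVF σ σβ) p (driftVF σ σβ κ βbar δ r p)
      - fderiv ℝ (driftVF σ σβ κ βbar δ r) p (diffusionVF σ σβ p)
      = (-(p.1 * κ * (βbar - p.2)) / σ, -(σβ / σ) * (κ * σ - σβ)) :=
  stmt1_general σ σβ κ βbar δ r hσ p
end

section
/- Let σ, σ_β, κ > 0 and β̄, δ, r ∈ ℝ, and consider the vector fields on ℝ² given by V⁰(z,β) = ( z(β² - σσ_β + 2σ²(δ-r))/(2σ²), (βσ_β + κσ(β̄-β))/σ ) and V¹(z,β) = ( -(β/σ)z, -σ_β ). Then the iterated Lie bracket satisfies [V¹,[V⁰,V¹]](z,β) = ( -(σ_β z/σ²)(2κσ - σ_β), 0 ), and the determinant of the 2×2 matrix with columns V¹(z,β) and [V¹,[V⁰,V¹]](z,β) equals -(σ_β² z/σ²)(2κσ - σ_β). In particular, if κσ > σ_β and z > 0, this determinant is strictly negative, so the vectors V¹(z,β) and [V¹,[V⁰,V¹]](z,β)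 are linearly independent and span ℝ². -/
/-- The Lie bracket `[V,U] = DU·V - DV·U` of two vector fields on `ℝ²`. -/
noncomputable def lieBracketVF (V U : ℝ × ℝ → ℝ × ℝ) : ℝ × ℝ → ℝ × ℝ :=
  fun p => fderiv ℝ U p (V p) - fderiv ℝ V p (U p)

/-! Both fields have the form `(z g(β), h(β))`, and such fields are closed under the Lie bracket,
with coefficients computed from `g, h` and their one-variable derivatives. The bracket
`[V⁰,V¹]` has constant second coefficient, so `[V¹,[V⁰,V¹]]` is horizontal, and the determinant
against `V¹ = (·, -σ_β)` is `σ_β` times its first coordinate. -/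

section DetPair

variable {K : Type*} [Field K] {u v : K × K}

theorem linearIndependent_pair_of_det_ne_zero (h : !![u.1, v.1; u.2, v.2].det ≠ 0) :
    LinearIndependent K ![u, v] := by
  rw [Matrix.det_fin_two_of] at h
  refine linearIndependent_fin2.2 ⟨?_, fun a hu => h ?_⟩
  · rintro rfl
    simp at h
  · simp only [Matrix.cons_val_one, Matrix.cons_val_zero] at hu
    simp only [← hu, Prod.smul_fst, Prod.smul_snd, smul_eq_mul]
    ring

theorem span_pair_eq_top_of_det_ne_zero (h : !![u.1, v.1; u.2, v.2].det ≠ 0) :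
    Submodule.span K {u, v} = ⊤ := by
  simpa [Matrix.range_cons, Set.pair_comm] using
    (linearIndependent_pair_of_det_ne_zero h).span_eq_top_of_card_eq_finrank
      (by simp [Module.finrank_prod])

end DetPair

def fiberLinearVF (g h : ℝ → ℝ) : ℝ × ℝ → ℝ × ℝ :=
  fun q => (q.1 * g q.2, h q.2)

section FiberLinear

variable {g h g' h' : ℝ → ℝ}

theorem fderiv_fiberLinearVF_apply (hg : ∀ b, HasDerivAt g (g' b) b)
    (hh : ∀ b, HasDerivAt h (h' b) b) (p v : ℝ × ℝ) :
    fderiv ℝ (fiberLinearVF g h) p v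
      = (v.1 * g p.2 + p.1 * (g' p.2 * v.2), h' p.2 * v.2) := by
  have hG := (hg p.2).comp_hasFDerivAt p (hasFDerivAt_snd (𝕜 := ℝ) (E := ℝ))
  have hH := (hh p.2).comp_hasFDerivAt p (hasFDerivAt_snd (𝕜 := ℝ) (E := ℝ))
  have hF : HasFDerivAt (fiberLinearVF g h) _ p := (hasFDerivAt_fst.mul hG).prodMk hH
  rw [hF.fderiv]
  simp only [Function.comp_apply, ContinuousLinearMap.prod_apply, add_apply, smul_apply,
    ContinuousLinearMap.coe_snd', smul_eq_mul, ContinuousLinearMap.coe_fst', Prod.ext_iff, and_true]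
  ring

theorem lieBracketVF_fiberLinearVF {g₁ h₁ g₁' h₁' : ℝ → ℝ}
    (hg₁ : ∀ b, HasDerivAt g₁ (g₁' b) b) (hh₁ : ∀ b, HasDerivAt h₁ (h₁' b) b)
    (hg : ∀ b, HasDerivAt g (g' b) b) (hh : ∀ b, HasDerivAt h (h' b) b) :
    lieBracketVF (fiberLinearVF g₁ h₁) (fiberLinearVF g h)
      = fiberLinearVF (fun b => g' b * h₁ b - g₁' b * h b)
          (fun b => h' b * h₁ b - h₁' b * h b) := by
  funext p
  simp only [lieBracketVF, fderiv_fiberLinearVF_apply hg₁ hh₁, fderiv_fiberLinearVF_apply hg hh,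
    fiberLinearVF, Prod.mk_sub_mk, Prod.mk.injEq, and_true]
  ring

end FiberLinear

section Diffusion

variable {σ σβ κ βbar δ r : ℝ}

theorem diffusionVF_eq_fiberLinearVF :
    diffusionVF σ σβ = fiberLinearVF (fun b => -(b / σ)) (fun _ => -σβ) := by
  funext q
  simp only [diffusionVF, fiberLinearVF, Prod.mk.injEq, and_true]
  ring

theorem driftVF_eq_fiberLinearVF :
    driftVF σ σβ κ βbar δ r
      = fiberLinearVF (fun b => (b ^ 2 - σ * σβ + 2 * σ ^ 2 * (δ - r)) / (2 * σ ^ 2))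
          (fun b => (b * σβ + κ * σ * (βbar - b)) / σ) := by
  funext q
  simp only [driftVF, fiberLinearVF, Prod.mk.injEq, and_true]
  ring

theorem lieBracketVF_driftVF_diffusionVF (hσ : σ ≠ 0) :
    lieBracketVF (driftVF σ σβ κ βbar δ r) (diffusionVF σ σβ)
      = fiberLinearVF (fun b => κ * (b - βbar) / σ) (fun _ => σβ * (σβ - κ * σ) / σ) := by
  have hg₀ (b : ℝ) : HasDerivAt
      (fun b => (b ^ 2 - σ * σβ + 2 * σ ^ 2 * (δ - r)) / (2 * σ ^ 2)) (b / σ ^ 2) b := by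
    refine ((((hasDerivAt_pow 2 b).sub_const _).add_const _).div_const _).congr_deriv ?_
    field_simp
    ring
  have hh₀ (b : ℝ) : HasDerivAt
      (fun b => (b * σβ + κ * σ * (βbar - b)) / σ) ((σβ - κ * σ) / σ) b := by
    refine ((((hasDerivAt_id b).mul_const σβ).add
      (((hasDerivAt_id b).const_sub βbar).const_mul (κ * σ))).div_const σ).congr_deriv ?_
    ring
  have hg₁ (b : ℝ) : HasDerivAt (fun b => -(b / σ)) (-(1 / σ)) b :=
    ((hasDerivAt_id b).div_const σ).neg
  rw [driftVF_eq_fiberLinearVF, diffusionVF_eq_fiberLinearVF,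
    lieBracketVF_fiberLinearVF hg₀ hh₀ hg₁ (fun b => hasDerivAt_const b _)]
  congr 1 <;> funext b <;> field_simp <;> ring

theorem lieBracketVF_diffusionVF_lieBracketVF (hσ : σ ≠ 0) :
    lieBracketVF (diffusionVF σ σβ) (lieBracketVF (driftVF σ σβ κ βbar δ r) (diffusionVF σ σβ))
      = fun p => (-(σβ * p.1 / σ ^ 2) * (2 * κ * σ - σβ), 0) := by
  have hg₁ (b : ℝ) : HasDerivAt (fun b => -(b / σ)) (-(1 / σ)) b :=
    ((hasDerivAt_id b).div_const σ).neg
  have hg₂ (b : ℝ) : HasDerivAt (fun b => κ * (b - βbar) / σ) (κ / σ) b := by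
    refine ((((hasDerivAt_id b).sub_const βbar).const_mul κ).div_const σ).congr_deriv ?_
    ring
  rw [lieBracketVF_driftVF_diffusionVF hσ, diffusionVF_eq_fiberLinearVF,
    lieBracketVF_fiberLinearVF hg₁ (fun b => hasDerivAt_const b _) hg₂
      (fun b => hasDerivAt_const b _)]
  refine funext fun p => Prod.ext ?_ (by simp [fiberLinearVF])
  simp only [fiberLinearVF]
  field_simp
  ring

end Diffusion

theorem stmt2_general (σ σβ κ βbar δ r : ℝ) (hσ : 0 < σ) (hσβ : 0 < σβ)
    (p : ℝ × ℝ) :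
    lieBracketVF (diffusionVF σ σβ)
        (lieBracketVF (driftVF σ σβ κ βbar δ r) (diffusionVF σ σβ)) p
      = (-(σβ * p.1 / σ ^ 2) * (2 * κ * σ - σβ), 0) ∧
    (Matrix.det
        !![(diffusionVF σ σβ p).1,
            (lieBracketVF (diffusionVF σ σβ)
              (lieBracketVF (driftVF σ σβ κ βbar δ r) (diffusionVF σ σβ)) p).1;
          (diffusionVF σ σβ p).2,
            (lieBracketVF (diffusionVF σ σβ)
              (lieBracketVF (driftVF σ σβ κ βbar δ r) (diffusionVF σ σβ)) p).2]
      = -(σβ ^ 2 * p.1 / σ ^ 2) * (2 * κ * σ - σβ)) ∧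
    (σβ < κ * σ → 0 < p.1 →
      Matrix.det
        !![(diffusionVF σ σβ p).1,
            (lieBracketVF (diffusionVF σ σβ)
              (lieBracketVF (driftVF σ σβ κ βbar δ r) (diffusionVF σ σβ)) p).1;
          (diffusionVF σ σβ p).2,
            (lieBracketVF (diffusionVF σ σβ)
              (lieBracketVF (driftVF σ σβ κ βbar δ r) (diffusionVF σ σβ)) p).2] < 0 ∧
      LinearIndependent ℝ
        ![diffusionVF σ σβ p,
          lieBracketVF (diffusionVF σ σβ)
            (lieBracketVF (driftVF σ σβ κ βbar δ r) (diffusionVF σ σβ)) p] ∧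
      Submodule.span ℝ
        {diffusionVF σ σβ p,
          lieBracketVF (diffusionVF σ σβ)
            (lieBracketVF (driftVF σ σβ κ βbar δ r) (diffusionVF σ σβ)) p} = ⊤) := by
  set V := diffusionVF σ σβ p with hV
  set W := lieBracketVF (diffusionVF σ σβ)
    (lieBracketVF (driftVF σ σβ κ βbar δ r) (diffusionVF σ σβ)) p
  have hW : W = (-(σβ * p.1 / σ ^ 2) * (2 * κ * σ - σβ), 0) :=
    congrFun (lieBracketVF_diffusionVF_lieBracketVF hσ.ne') p
  have hdet : !![V.1, W.1; V.2, W.2].det = -(σβ ^ 2 * p.1 / σ ^ 2) * (2 * κ * σ - σβ) := by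
    rw [Matrix.det_fin_two_of, hW, hV, diffusionVF]
    ring
  refine ⟨hW, hdet, fun hκσ hz => ?_⟩
  have hneg : !![V.1, W.1; V.2, W.2].det < 0 := by
    have : 0 < σβ ^ 2 * p.1 / σ ^ 2 * (2 * κ * σ - σβ) := mul_pos (by positivity) (by linarith)
    linarith
  exact ⟨hneg, linearIndependent_pair_of_det_ne_zero hneg.ne,
    span_pair_eq_top_of_det_ne_zero hneg.ne⟩

/-- The iterated Lie bracket `[V¹,[V⁰,V¹]]` equals `( -(σ_β z/σ²)(2κσ - σ_β), 0 )`; the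
determinant of the matrix with columns `V¹` and `[V¹,[V⁰,V¹]]` equals
`-(σ_β² z/σ²)(2κσ - σ_β)`; and if `κσ > σ_β` and `z > 0` the determinant is negative and
the two vectors are linearly independent and span `ℝ²` (Hörmander's condition). -/
theorem stmt2 (σ σβ κ βbar δ r : ℝ) (hσ : 0 < σ) (hσβ : 0 < σβ) (hκ : 0 < κ)
    (p : ℝ × ℝ) :
    lieBracketVF (diffusionVF σ σβ)
        (lieBracketVF (driftVF σ σβ κ βbar δ r) (diffusionVF σ σβ)) p
      = (-(σβ * p.1 / σ ^ 2) * (2 * κ * σ - σβ), 0) ∧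
    (Matrix.det
        !![(diffusionVF σ σβ p).1,
            (lieBracketVF (diffusionVF σ σβ)
              (lieBracketVF (driftVF σ σβ κ βbar δ r) (diffusionVF σ σβ)) p).1;
          (diffusionVF σ σβ p).2,
            (lieBracketVF (diffusionVF σ σβ)
              (lieBracketVF (driftVF σ σβ κ βbar δ r) (diffusionVF σ σβ)) p).2]
      = -(σβ ^ 2 * p.1 / σ ^ 2) * (2 * κ * σ - σβ)) ∧
    (σβ < κ * σ → 0 < p.1 →
      Matrix.det
        !![(diffusionVF σ σβ p).1,
            (lieBracketVF (diffusionVF σ σβ)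
              (lieBracketVF (driftVF σ σβ κ βbar δ r) (diffusionVF σ σβ)) p).1;
          (diffusionVF σ σβ p).2,
            (lieBracketVF (diffusionVF σ σβ)
              (lieBracketVF (driftVF σ σβ κ βbar δ r) (diffusionVF σ σβ)) p).2] < 0 ∧
      LinearIndependent ℝ
        ![diffusionVF σ σβ p,
          lieBracketVF (diffusionVF σ σβ)
            (lieBracketVF (driftVF σ σβ κ βbar δ r) (diffusionVF σ σβ)) p] ∧
      Submodule.span ℝ
        {diffusionVF σ σβ p,
          lieBracketVF (diffusionVF σ σβ)
            (lieBracketVF (driftVF σ σβ κ βbar δ r) (diffusionVF σ σβ)) p} = ⊤) :=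
  stmt2_general σ σβ κ βbar δ r hσ hσβ p
end

section
/- Let v : (0,∞) × ℝ → ℝ be continuous, with v(z,β) ≤ 0 for all (z,β), and such that z ↦ v(z,β) is nondecreasing for every β ∈ ℝ. Define z*(β) := inf{ z > 0 : v(z,β) ≥ 0 } ∈ [0,∞] (with inf ∅ = +∞). Then { (z,β) ∈ (0,∞)×ℝ : v(z,β) = 0 } = { (z,β) ∈ (0,∞)×ℝ : z ≥ z*(β) }, the set { (z,β) : v(z,β) < 0 } equals { (z,β) : z < z*(β) }, and the function β ↦ z*(β) is lower semicontinuous on ℝ. -/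
/-!
Monotonicity in `z` and right-continuity give `z*(β) ≤ z ↔ 0 ≤ v(z,β)` for `z > 0`, which with
`v ≤ 0` identifies both regions. Hence `{β | z < z*(β)} = {β | v(z,β) < 0}` is open for each
`z > 0`, and testing lower semicontinuity against such `z` suffices.
-/

open scoped ENNReal

open Set

noncomputable def nonnegThreshold (f : ℝ → ℝ) : ℝ≥0∞ :=
  sInf (ENNReal.ofReal '' {z : ℝ | 0 < z ∧ 0 ≤ f z})

section nonnegThreshold

variable {f : ℝ → ℝ} {z : ℝ}

/-- Monotonicity makes `0 ≤ f` on all of `(z, ∞)`, and right-continuity passes this to `z`. -/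
theorem nonnegThreshold_le_ofReal_iff (hmono : MonotoneOn f (Ioi 0))
    (hf : ContinuousWithinAt f (Ioi z) z) (hz : 0 < z) :
    nonnegThreshold f ≤ ENNReal.ofReal z ↔ 0 ≤ f z := by
  refine ⟨fun h => ?_, fun h => sInf_le ⟨z, ⟨hz, h⟩, rfl⟩⟩
  have hright : ∀ z' ∈ Ioi z, 0 ≤ f z' := by
    intro z' hzz'
    have hz' : 0 < z' := hz.trans hzz'
    have hlt : nonnegThreshold f < ENNReal.ofReal z' :=
      h.trans_lt ((ENNReal.ofReal_lt_ofReal_iff hz').mpr hzz')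
    obtain ⟨_, ⟨w, ⟨hw, hfw⟩, rfl⟩, hwz'⟩ := sInf_lt_iff.mp hlt
    have hwz'_le : w ≤ z' := (ENNReal.ofReal_lt_ofReal_iff hz').mp hwz' |>.le
    exact hfw.trans (hmono hw hz' hwz'_le)
  exact ge_of_tendsto hf.tendsto (eventually_nhdsWithin_of_forall hright)

theorem ofReal_lt_nonnegThreshold_iff (hmono : MonotoneOn f (Ioi 0))
    (hf : ContinuousWithinAt f (Ioi z) z) (hz : 0 < z) :
    ENNReal.ofReal z < nonnegThreshold f ↔ f z < 0 := by
  rw [← not_le, nonnegThreshold_le_ofReal_iff hmono hf hz, not_le]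

end nonnegThreshold

theorem lowerSemicontinuous_of_isOpen_ofReal_lt {α : Type*} [TopologicalSpace α]
    {g : α → ℝ≥0∞} (h : ∀ z : ℝ, 0 < z → IsOpen {x | ENNReal.ofReal z < g x}) :
    LowerSemicontinuous g := by
  intro x c hc
  obtain ⟨r, -, hcr, hrx⟩ := ENNReal.lt_iff_exists_real_btwn.mp hc
  have hr : 0 < r := ENNReal.ofReal_pos.mp (zero_le.trans_lt hcr)
  filter_upwards [(h r hr).mem_nhds hrx] with y hy
  exact hcr.trans hy

/-- Free-boundary structure: for a continuous, nonpositive value function `v` on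
`(0,∞) × ℝ` that is nondecreasing in `z`, the boundary
`z*(β) = inf{z > 0 : v(z,β) ≥ 0} ∈ [0,∞]` (with `inf ∅ = ∞`) separates the stopping
region `{v = 0} = {z ≥ z*(β)}` from the continuation region `{v < 0} = {z < z*(β)}`,
and `z*` is lower semicontinuous. -/
theorem stmt3 (v : ℝ → ℝ → ℝ)
    (hcont : ContinuousOn (fun p : ℝ × ℝ => v p.1 p.2) (Set.Ioi 0 ×ˢ Set.univ))
    (hnonpos : ∀ z β : ℝ, 0 < z → v z β ≤ 0)
    (hmono : ∀ β : ℝ, MonotoneOn (fun z => v z β) (Set.Ioi 0))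
    (zstar : ℝ → ℝ≥0∞)
    (hzstar : ∀ β : ℝ, zstar β = sInf (ENNReal.ofReal '' {z : ℝ | 0 < z ∧ 0 ≤ v z β})) :
    ({p : ℝ × ℝ | 0 < p.1 ∧ v p.1 p.2 = 0}
        = {p : ℝ × ℝ | 0 < p.1 ∧ zstar p.2 ≤ ENNReal.ofReal p.1}) ∧
    ({p : ℝ × ℝ | 0 < p.1 ∧ v p.1 p.2 < 0}
        = {p : ℝ × ℝ | 0 < p.1 ∧ ENNReal.ofReal p.1 < zstar p.2}) ∧
    LowerSemicontinuous zstar := by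
  obtain rfl : zstar = fun β => nonnegThreshold (v · β) := funext hzstar
  have hcont_z (β z : ℝ) (hz : 0 < z) : ContinuousWithinAt (v · β) (Ioi z) z :=
    ((hcont.comp (Continuous.prodMk_left β).continuousOn fun _ hw => ⟨hw, trivial⟩)
      |>.continuousAt (isOpen_Ioi.mem_nhds hz)).continuousWithinAt
  have hcont_β (z : ℝ) (hz : 0 < z) : Continuous (v z ·) :=
    hcont.comp_continuous (Continuous.prodMk_right z) fun _ => ⟨hz, trivial⟩
  refine ⟨?_, ?_, ?_⟩
  · ext ⟨z, β⟩
    refine and_congr_right fun hz => ?_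
    rw [nonnegThreshold_le_ofReal_iff (hmono β) (hcont_z β z hz) hz]
    exact ⟨ge_of_eq, (hnonpos z β hz).antisymm⟩
  · ext ⟨z, β⟩
    exact and_congr_right fun hz =>
      (ofReal_lt_nonnegThreshold_iff (hmono β) (hcont_z β z hz) hz).symm
  · refine lowerSemicontinuous_of_isOpen_ofReal_lt fun z hz => ?_
    simp_rw [ofReal_lt_nonnegThreshold_iff (hmono _) (hcont_z _ z hz) hz]
    exact isOpen_lt (hcont_β z hz) continuous_const
end

section
/- Let z* : ℝ → (0,∞] be lower semicontinuous, let b : [0,∞) → ℝ be continuous, and let Z : [0,∞) → (0,∞) be continuous. Define h(t) := inf_{0 ≤ s ≤ t} min( z*(b_s)/Z_s , 1 ) for t ≥ 0. Then h is nonincreasing and right-continuous on [0,∞) (hence càdlàg, since nonincreasing functions admit left limits). -/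
open scoped ENNReal
open Set Filter Topology

/-! In `ℝ≥0∞`, dividing a lower semicontinuous function by a continuous one keeps it lower
semicontinuous: division is multiplication by the continuous inverse, and the only discontinuity of
multiplication, `0 * ∞ = 0`, takes the least value. So `s ↦ min (z*(b s) / Z s) 1` is lower
semicontinuous, and the running infimum of such a function is right-continuous, since just to the
right of `t` the function stays above any level below its running infimum at `t`. -/

theorem LowerSemicontinuousWithinAt.ennreal_mul {α : Type*} [TopologicalSpace α]
    {f g : α → ℝ≥0∞} {s : Set α} {x : α} (hf : LowerSemicontinuousWithinAt f s x)
    (hg : LowerSemicontinuousWithinAt g s x) :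
    LowerSemicontinuousWithinAt (fun y ↦ f y * g y) s x := by
  intro c hc
  obtain ⟨a, ha, b, hb, hab⟩ : ∃ a < f x, ∃ b < g x, c < a * b := by
    by_contra! H
    exact hc.not_ge (ENNReal.mul_le_of_forall_lt H)
  filter_upwards [hf a ha, hg b hb] with y hay hby
  exact hab.trans_le (mul_le_mul' hay.le hby.le)

theorem LowerSemicontinuousWithinAt.ennreal_div {α : Type*} [TopologicalSpace α]
    {f g : α → ℝ≥0∞} {s : Set α} {x : α} (hf : LowerSemicontinuousWithinAt f s x)
    (hg : ContinuousWithinAt g s x) :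
    LowerSemicontinuousWithinAt (fun y ↦ f y / g y) s x :=
  hf.ennreal_mul hg.inv.lowerSemicontinuousWithinAt

section RunningInf

variable {α : Type*} [CompleteLinearOrder α]

def runningInf (a : ℝ) (g : ℝ → α) (t : ℝ) : α :=
  ⨅ s ∈ Icc a t, g s

theorem runningInf_antitone (a : ℝ) (g : ℝ → α) : Antitone (runningInf a g) :=
  fun _ _ hts ↦ biInf_mono fun _ hr ↦ ⟨hr.1, hr.2.trans hts⟩

theorem runningInf_le {a t s : ℝ} (g : ℝ → α) (hs : s ∈ Icc a t) : runningInf a g t ≤ g s :=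
  iInf₂_le s hs

theorem continuousWithinAt_runningInf [TopologicalSpace α] [OrderTopology α] [DenselyOrdered α]
    {a t : ℝ} {g : ℝ → α} (hat : a ≤ t)
    (hg : LowerSemicontinuousWithinAt g (Ici t) t) :
    ContinuousWithinAt (runningInf a g) (Ici t) t := by
  refine tendsto_order.2 ⟨fun c hc ↦ ?_, fun c hc ↦ ?_⟩
  · obtain ⟨c', hcc', hc'⟩ := exists_between hc
    obtain ⟨u, htu, hu⟩ := mem_nhdsGE_iff_exists_Ico_subset.1
      (hg c' (hc'.trans_le (runningInf_le g ⟨hat, le_rfl⟩)))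
    filter_upwards [Ico_mem_nhdsGE htu] with s hs
    refine hcc'.trans_le (le_iInf₂ fun r hr ↦ ?_)
    rcases le_or_gt r t with hrt | htr
    · exact hc'.le.trans (runningInf_le g ⟨hr.1, hrt⟩)
    · exact (hu ⟨htr.le, hr.2.trans_lt hs.2⟩).le
  · filter_upwards [self_mem_nhdsWithin] with s hs
    exact (runningInf_antitone a g hs).trans_lt hc

end RunningInf

theorem stmt7_general (zstar : ℝ → ℝ≥0∞)
    (hlsc : LowerSemicontinuous zstar)
    (b Z : ℝ → ℝ)
    (hb : ContinuousOn b (Set.Ici 0))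
    (hZ : ContinuousOn Z (Set.Ici 0))
    (h : ℝ → ℝ≥0∞)
    (hh : ∀ t : ℝ,
      h t = ⨅ s ∈ Set.Icc (0 : ℝ) t, min (zstar (b s) / ENNReal.ofReal (Z s)) 1) :
    AntitoneOn h (Set.Ici 0) ∧
    ∀ t ∈ Set.Ici (0 : ℝ), ContinuousWithinAt h (Set.Ici t) t := by
  obtain rfl : h = runningInf 0 fun s ↦ min (zstar (b s) / ENNReal.ofReal (Z s)) 1 := funext hh
  refine ⟨(runningInf_antitone _ _).antitoneOn _, fun t ht ↦ continuousWithinAt_runningInf ht ?_⟩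
  have hzb : LowerSemicontinuousWithinAt (zstar ∘ b) (Ici 0) t :=
    (hlsc.lowerSemicontinuousWithinAt univ (b t)).comp (hb t ht) (mapsTo_univ _ _)
  have hZ' : ContinuousWithinAt (ENNReal.ofReal ∘ Z) (Ici 0) t :=
    ENNReal.continuous_ofReal.continuousAt.comp_continuousWithinAt (hZ t ht)
  exact ((hzb.ennreal_div hZ').inf lowerSemicontinuousWithinAt_const).mono
    (Ici_subset_Ici.2 ht)

/-- Pathwise regularity of the optimal singular control: with `z* : ℝ → (0,∞]` lower
semicontinuous, `b` continuous on `[0,∞)` and `Z` continuous and positive on `[0,∞)`,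
the running infimum `h(t) = inf_{0≤s≤t} min(z*(b_s)/Z_s, 1)` is nonincreasing and
right-continuous on `[0,∞)`. -/
theorem stmt7 (zstar : ℝ → ℝ≥0∞) (hzpos : ∀ β : ℝ, 0 < zstar β)
    (hlsc : LowerSemicontinuous zstar)
    (b Z : ℝ → ℝ)
    (hb : ContinuousOn b (Set.Ici 0))
    (hZ : ContinuousOn Z (Set.Ici 0))
    (hZpos : ∀ s ∈ Set.Ici (0 : ℝ), 0 < Z s)
    (h : ℝ → ℝ≥0∞)
    (hh : ∀ t : ℝ,
      h t = ⨅ s ∈ Set.Icc (0 : ℝ) t, min (zstar (b s) / ENNReal.ofReal (Z s)) 1) :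
    AntitoneOn h (Set.Ici 0) ∧
    ∀ t ∈ Set.Ici (0 : ℝ), ContinuousWithinAt h (Set.Ici t) t :=
  stmt7_general zstar hlsc b Z hb hZ h hh
end
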